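/- arXiv:2511.05382 — 2 statements merged into one kernel-verified Lean document; each statement's English description precedes it below -/
import Mathlib

section
/- Let χ : [0,1] → ℝ be continuously differentiable with χ ≥ 0, let α > 0 and ε > 0, let g : [0,1] → ℝ be continuous, and let p, T : [0,1] → ℝ be twice continuously differentiable with p(1) = 0 and T(1) = 0, satisfying for all x ∈ [0,1] the identity α⁻¹·p(x)·x − (d/dx)(x·χ(x)·p'(x)) = (d/dx)(x·χ(x)·T'(x)) − g(x)·x. Then 2·(α⁻¹ − ε)·∫₀¹ p(x)²·x dx + ∫₀¹ χ(x)·(p'(x))²·x dx ≤ ∫₀¹ χ(x)·(T'(x))²·x dx + (1/(2ε))·∫₀¹ g(x)²·x dx. -/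
/-! Multiply the adjoint equation by `p x` and integrate over `[0, 1]`. Integrating by parts moves
one derivative from each flux `x χ ∂ₓ(·)` onto `p`; the boundary terms vanish because the flux
carries the factor `x` at `0` and `p 1 = 0`. This gives the energy identity
`α⁻¹ ∫ p² x + ∫ χ p'² x + ∫ χ p' T' x + ∫ g p x = 0`, and Young's inequality on the flux term
together with the Peter–Paul inequality on the source term turns it into the estimate.

Derivatives are taken within `[0, 1]`, where `ContDiffOn` controls them; they agree with `deriv` on
the open interval, hence under the integrals. -/

open Set Filter intervalIntegral

theorem deriv_eq_derivWithin_Icc_of_eqOn_Ioo {f g : ℝ → ℝ} {a b x : ℝ}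
    (hfg : EqOn f g (Ioo a b)) (hx : x ∈ Ioo a b) :
    deriv f x = derivWithin g (Icc a b) x := by
  rw [(eventuallyEq_of_mem (Ioo_mem_nhds hx.1 hx.2) hfg).deriv_eq,
    derivWithin_of_mem_nhds (Icc_mem_nhds hx.1 hx.2)]

theorem integral_derivWithin_mul_add_mul_derivWithin {u v : ℝ → ℝ} {a b : ℝ} (hab : a < b)
    (hu : ContDiffOn ℝ 1 u (Icc a b)) (hv : ContDiffOn ℝ 1 v (Icc a b)) :
    ∫ x in a..b, (derivWithin u (Icc a b) x * v x + u x * derivWithin v (Icc a b) x)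
      = u b * v b - u a * v a := by
  have hs : UniqueDiffOn ℝ (Icc a b) := uniqueDiffOn_Icc hab
  have hderiv {f : ℝ → ℝ} (hf : ContDiffOn ℝ 1 f (Icc a b)) :
      ∀ x ∈ uIcc a b, HasDerivWithinAt f (derivWithin f (Icc a b) x) (uIcc a b) x := by
    rw [uIcc_of_le hab.le]
    exact fun x hx ↦ (hf.differentiableOn one_ne_zero x hx).hasDerivWithinAt
  exact integral_deriv_mul_eq_sub_of_hasDerivWithinAt (hderiv hu) (hderiv hv)
    ((hu.continuousOn_derivWithin hs le_rfl).intervalIntegrable_of_Icc hab.le)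
    ((hv.continuousOn_derivWithin hs le_rfl).intervalIntegrable_of_Icc hab.le)

theorem energy_integrand_le {α ε χ x p P Θ g : ℝ} (hε : 0 < ε) (hχ : 0 ≤ χ) (hx : 0 ≤ x) :
    2 * (α⁻¹ - ε) * (p ^ 2 * x) + χ * P ^ 2 * x - χ * Θ ^ 2 * x
        - 1 / (2 * ε) * (g ^ 2 * x)
      ≤ 2 * (α⁻¹ * p ^ 2 * x + χ * P ^ 2 * x + χ * P * Θ * x + g * p * x) := by
  have key : 2 * (α⁻¹ * p ^ 2 * x + χ * P ^ 2 * x + χ * P * Θ * x + g * p * x)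
      - (2 * (α⁻¹ - ε) * (p ^ 2 * x) + χ * P ^ 2 * x - χ * Θ ^ 2 * x
        - 1 / (2 * ε) * (g ^ 2 * x))
      = χ * x * (P + Θ) ^ 2 + x * (2 * ε * p + g) ^ 2 / (2 * ε) := by
    field_simp
    ring
  have : 0 ≤ χ * x * (P + Θ) ^ 2 + x * (2 * ε * p + g) ^ 2 / (2 * ε) := by positivity
  linarith

theorem adjoint_energy_identity {χ g p T : ℝ → ℝ} {α : ℝ}
    (hχ : ContDiffOn ℝ 1 χ (Icc 0 1)) (hp : ContDiffOn ℝ 2 p (Icc 0 1))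
    (hT : ContDiffOn ℝ 2 T (Icc 0 1)) (hp1 : p 1 = 0)
    (heq : ∀ x ∈ Ioo (0:ℝ) 1, α⁻¹ * p x * x - deriv (fun y => y * χ y * deriv p y) x
        = deriv (fun y => y * χ y * deriv T y) x - g x * x) :
    ∫ x in (0:ℝ)..1, (α⁻¹ * p x ^ 2 * x + χ x * derivWithin p (Icc 0 1) x ^ 2 * x
      + χ x * derivWithin p (Icc 0 1) x * derivWithin T (Icc 0 1) x * x + g x * p x * x) = 0 := by
  set s := Icc (0:ℝ) 1
  have hs : UniqueDiffOn ℝ s := uniqueDiffOn_Icc zero_lt_one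
  have hflux {f : ℝ → ℝ} (hf : ContDiffOn ℝ 2 f s) :
      ContDiffOn ℝ 1 (fun y => y * χ y * derivWithin f s y) s :=
    (contDiffOn_id.mul hχ).mul (hf.derivWithin hs (by norm_num))
  have hflux_deriv (f : ℝ → ℝ) :
      ∀ x ∈ Ioo (0:ℝ) 1, deriv (fun y => y * χ y * deriv f y) x
        = derivWithin (fun y => y * χ y * derivWithin f s y) s x :=
    fun x ↦ deriv_eq_derivWithin_Icc_of_eqOn_Ioo fun y hy ↦
      congrArg (y * χ y * ·) (deriv_eq_derivWithin_Icc_of_eqOn_Ioo (eqOn_refl f _) hy)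
  have hparts {f : ℝ → ℝ} (hf : ContDiffOn ℝ 2 f s) :
      IntervalIntegrable (fun x => derivWithin p s x * (x * χ x * derivWithin f s x)
        + p x * derivWithin (fun y => y * χ y * derivWithin f s y) s x)
        MeasureTheory.volume 0 1 ∧
      ∫ x in (0:ℝ)..1, (derivWithin p s x * (x * χ x * derivWithin f s x)
        + p x * derivWithin (fun y => y * χ y * derivWithin f s y) s x) = 0 := by
    refine ⟨?_, ?_⟩
    · refine ContinuousOn.intervalIntegrable_of_Icc zero_le_one (.add ?_ ?_)
      · exact (hp.continuousOn_derivWithin hs one_le_two).mul (hflux hf).continuousOn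
      · exact hp.continuousOn.mul ((hflux hf).continuousOn_derivWithin hs le_rfl)
    · simpa [hp1] using
        integral_derivWithin_mul_add_mul_derivWithin zero_lt_one (hp.of_le one_le_two) (hflux hf)
  rw [integral_congr_Ioo_of_le zero_le_one fun x hx => ?_,
    integral_add (hparts hp).1 (hparts hT).1, (hparts hp).2, (hparts hT).2, add_zero]
  have h := heq x hx
  rw [hflux_deriv p x hx, hflux_deriv T x hx] at h
  linear_combination p x * h

theorem adjoint_energy_estimate_general
    (χ : ℝ → ℝ) (hχ : ContDiffOn ℝ 1 χ (Set.Icc 0 1))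
    (hχ0 : ∀ x ∈ Set.Icc (0:ℝ) 1, 0 ≤ χ x)
    (α ε : ℝ) (hε : 0 < ε)
    (g : ℝ → ℝ) (hg : ContinuousOn g (Set.Icc 0 1))
    (p T : ℝ → ℝ)
    (hp : ContDiffOn ℝ 2 p (Set.Icc 0 1))
    (hT : ContDiffOn ℝ 2 T (Set.Icc 0 1))
    (hp1 : p 1 = 0)
    (heq : ∀ x ∈ Set.Icc (0:ℝ) 1,
      α⁻¹ * p x * x - deriv (fun y => y * χ y * deriv p y) x
        = deriv (fun y => y * χ y * deriv T y) x - g x * x) :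
    2 * (α⁻¹ - ε) * (∫ x in (0:ℝ)..1, (p x) ^ 2 * x)
      + (∫ x in (0:ℝ)..1, χ x * (deriv p x) ^ 2 * x)
    ≤ (∫ x in (0:ℝ)..1, χ x * (deriv T x) ^ 2 * x)
      + (1 / (2 * ε)) * (∫ x in (0:ℝ)..1, (g x) ^ 2 * x) := by
  set s := Icc (0:ℝ) 1
  have hs : UniqueDiffOn ℝ s := uniqueDiffOn_Icc zero_lt_one
  have hderiv {f : ℝ → ℝ} : ∫ x in (0:ℝ)..1, χ x * deriv f x ^ 2 * x
      = ∫ x in (0:ℝ)..1, χ x * derivWithin f s x ^ 2 * x :=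
    integral_congr_Ioo_of_le zero_le_one fun x hx ↦ by
      rw [deriv_eq_derivWithin_Icc_of_eqOn_Ioo (eqOn_refl f _) hx]
  rw [hderiv, hderiv]
  set P := derivWithin p s
  set Θ := derivWithin T s
  have := hp.continuousOn
  have := hp.continuousOn_derivWithin hs one_le_two
  have := hT.continuousOn_derivWithin hs one_le_two
  have := hχ.continuousOn
  have hint {f : ℝ → ℝ} (hf : ContinuousOn f s) :
      IntervalIntegrable f MeasureTheory.volume 0 1 :=
    hf.intervalIntegrable_of_Icc zero_le_one
  have hmono : ∫ x in (0:ℝ)..1, (2 * (α⁻¹ - ε) * (p x ^ 2 * x) + χ x * P x ^ 2 * x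
        - χ x * Θ x ^ 2 * x - 1 / (2 * ε) * (g x ^ 2 * x))
      ≤ ∫ x in (0:ℝ)..1, 2 * (α⁻¹ * p x ^ 2 * x + χ x * P x ^ 2 * x
        + χ x * P x * Θ x * x + g x * p x * x) :=
    integral_mono_on zero_le_one (hint (by fun_prop)) (hint (by fun_prop))
      fun x hx ↦ energy_integrand_le hε (hχ0 x hx) hx.1
  rw [integral_const_mul,
    adjoint_energy_identity hχ hp hT hp1 fun x hx ↦ heq x (Ioo_subset_Icc_self hx),
    integral_sub (hint (by fun_prop)) (hint (by fun_prop)),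
    integral_sub (hint (by fun_prop)) (hint (by fun_prop)),
    integral_add (hint (by fun_prop)) (hint (by fun_prop)),
    integral_const_mul, integral_const_mul] at hmono
  linarith

/-- Main a priori energy estimate for the costate: from the quasi-steady adjoint
equation, Young's inequality and the Peter–Paul (ε-Young) inequality yield
2(α⁻¹ − ε)‖p‖²_{L²ₓ} + ‖p‖²_{Ḣ¹_{xχ}} ≤ ‖T‖²_{Ḣ¹_{xχ}} + (1/(2ε))‖g‖²_{L²ₓ}. -/
theorem adjoint_energy_estimate
    (χ : ℝ → ℝ) (hχ : ContDiffOn ℝ 1 χ (Set.Icc 0 1))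
    (hχ0 : ∀ x ∈ Set.Icc (0:ℝ) 1, 0 ≤ χ x)
    (α ε : ℝ) (hα : 0 < α) (hε : 0 < ε)
    (g : ℝ → ℝ) (hg : ContinuousOn g (Set.Icc 0 1))
    (p T : ℝ → ℝ)
    (hp : ContDiffOn ℝ 2 p (Set.Icc 0 1))
    (hT : ContDiffOn ℝ 2 T (Set.Icc 0 1))
    (hp1 : p 1 = 0) (hT1 : T 1 = 0)
    (heq : ∀ x ∈ Set.Icc (0:ℝ) 1,
      α⁻¹ * p x * x - deriv (fun y => y * χ y * deriv p y) x
        = deriv (fun y => y * χ y * deriv T y) x - g x * x) :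
    2 * (α⁻¹ - ε) * (∫ x in (0:ℝ)..1, (p x) ^ 2 * x)
      + (∫ x in (0:ℝ)..1, χ x * (deriv p x) ^ 2 * x)
    ≤ (∫ x in (0:ℝ)..1, χ x * (deriv T x) ^ 2 * x)
      + (1 / (2 * ε)) * (∫ x in (0:ℝ)..1, (g x) ^ 2 * x) :=
  adjoint_energy_estimate_general χ hχ hχ0 α ε hε g hg p T hp hT hp1 heq
end

section
/- Let χ : [0,1] → ℝ be continuously differentiable and suppose there exists c > 0 with χ(x) ≥ c for all x ∈ [0,1]. Let λ > 0 be such that λ·∫₀¹ x·χ(x)·v(x)² dx ≤ ∫₀¹ x·χ(x)·(v'(x))² dx for every continuously differentiable v : [0,1] → ℝ with v(1) = 0. Let α > 0, let g : [0,1] → ℝ be continuous, and let p, T : [0,1] → ℝ be twice continuously differentiable with p(1) = 0 and T(1) = 0, satisfying for all x ∈ [0,1] the identity α⁻¹·p(x)·x − (d/dx)(x·χ(x)·p'(x)) = (d/dx)(x·χ(x)·T'(x)) − g(x)·x. Define u(x) = −α⁻¹·p(x). Then √(∫₀¹ u(x)²·x dx) ≤ √( ∫₀¹ g(x)²·x dx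 + α⁻¹·∫₀¹ χ(x)·(T'(x))²·x dx ). -/
/-!
Test the equation against `p` and integrate by parts: the flux terms lose their boundary values
because the weight `x χ x` vanishes at `0` and `p 1 = 0`. This gives the energy identity
`α⁻¹ ∫ x p² + ∫ x χ p'² = -∫ x χ T' p' - ∫ x g p`. Young's inequality bounds the right-hand side by
`½ ∫ x χ T'² + ½ ∫ x χ p'² + (α/2) ∫ x g² + (α⁻¹/2) ∫ x p²`; dropping the nonnegative term
`½ ∫ x χ p'²` leaves `α⁻¹ ∫ x p² ≤ ∫ x χ T'² + α ∫ x g²`, which is the claim after division by `α`.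
-/

open Set MeasureTheory intervalIntegral

section
variable {a b : ℝ}

theorem deriv_eqOn_derivWithin_Icc {f g : ℝ → ℝ} (h : EqOn f g (Ioo a b)) :
    EqOn (deriv f) (derivWithin g (Icc a b)) (Ioo a b) := fun x hx => by
  rw [derivWithin_of_mem_nhds (Icc_mem_nhds hx.1 hx.2)]
  exact h.deriv isOpen_Ioo hx

theorem DifferentiableOn.hasDerivAt_derivWithin_Icc {f : ℝ → ℝ}
    (hf : DifferentiableOn ℝ f (Icc a b)) {x : ℝ} (hx : x ∈ Ioo a b) :
    HasDerivAt f (derivWithin f (Icc a b) x) x := by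
  have hN : Icc a b ∈ nhds x := Icc_mem_nhds hx.1 hx.2
  rw [derivWithin_of_mem_nhds hN]
  exact ((hf x (Ioo_subset_Icc_self hx)).differentiableAt hN).hasDerivAt

theorem abs_mul_le_young {ε : ℝ} (hε : 0 < ε) (s t : ℝ) :
    |s * t| ≤ ε / 2 * s ^ 2 + ε⁻¹ / 2 * t ^ 2 := by
  have key : 2 * ε * |s * t| ≤ ε ^ 2 * s ^ 2 + t ^ 2 := by
    rw [abs_mul, ← sq_abs s, ← sq_abs t]
    nlinarith [sq_nonneg (ε * |s| - |t|)]
  have : ε / 2 * s ^ 2 + ε⁻¹ / 2 * t ^ 2 = (ε ^ 2 * s ^ 2 + t ^ 2) / (2 * ε) := by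
    field_simp
  rw [this, le_div_iff₀ (by positivity)]
  linarith

theorem abs_integral_mul_le_young (hab : a ≤ b) {ε : ℝ} (hε : 0 < ε) {ω f h : ℝ → ℝ}
    (hω : ContinuousOn ω (Icc a b)) (hω₀ : ∀ x ∈ Icc a b, 0 ≤ ω x)
    (hf : ContinuousOn f (Icc a b)) (hh : ContinuousOn h (Icc a b)) :
    |∫ x in a..b, ω x * f x * h x|
      ≤ ε / 2 * (∫ x in a..b, ω x * f x ^ 2) + ε⁻¹ / 2 * ∫ x in a..b, ω x * h x ^ 2 := by
  have hint : ∀ F : ℝ → ℝ, ContinuousOn F (Icc a b) → IntervalIntegrable F volume a b :=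
    fun F hF => hF.intervalIntegrable_of_Icc hab
  have hpointwise : ∀ x ∈ Icc a b,
      |ω x * f x * h x| ≤ ε / 2 * (ω x * f x ^ 2) + ε⁻¹ / 2 * (ω x * h x ^ 2) := by
    intro x hx
    rw [mul_assoc, abs_mul, abs_of_nonneg (hω₀ x hx)]
    nlinarith [mul_le_mul_of_nonneg_left (abs_mul_le_young hε (f x) (h x)) (hω₀ x hx)]
  calc |∫ x in a..b, ω x * f x * h x|
      ≤ ∫ x in a..b, |ω x * f x * h x| := abs_integral_le_integral_abs hab
    _ ≤ ∫ x in a..b, (ε / 2 * (ω x * f x ^ 2) + ε⁻¹ / 2 * (ω x * h x ^ 2)) :=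
        integral_mono_on hab (hint _ (by fun_prop)) (hint _ (by fun_prop)) hpointwise
    _ = _ := by
        rw [integral_add (hint _ (by fun_prop)) (hint _ (by fun_prop)),
          intervalIntegral.integral_const_mul, intervalIntegral.integral_const_mul]

variable {k w q : ℝ → ℝ}

-- `deriv` carries junk values at the endpoints, so fluxes are compared on `Ioo a b` with their
-- `derivWithin (Icc a b)` versions, which are continuous on `Icc a b`.

theorem eqOn_deriv_flux :
    EqOn (deriv fun y => k y * deriv w y)
      (derivWithin (fun y => k y * derivWithin w (Icc a b) y) (Icc a b)) (Ioo a b) :=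
  deriv_eqOn_derivWithin_Icc fun y hy => by
    simp only [deriv_eqOn_derivWithin_Icc (eqOn_refl w _) hy]

theorem contDiffOn_flux (hab : a < b) (hk : ContDiffOn ℝ 1 k (Icc a b))
    (hw : ContDiffOn ℝ 2 w (Icc a b)) :
    ContDiffOn ℝ 1 (fun y => k y * derivWithin w (Icc a b) y) (Icc a b) :=
  hk.mul (hw.derivWithin (uniqueDiffOn_Icc hab) le_rfl)

theorem intervalIntegrable_deriv_flux_mul (hab : a < b) (hk : ContDiffOn ℝ 1 k (Icc a b))
    (hw : ContDiffOn ℝ 2 w (Icc a b)) (hq : ContinuousOn q (Icc a b)) :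
    IntervalIntegrable (fun x => deriv (fun y => k y * deriv w y) x * q x) volume a b := by
  have hcont : ContinuousOn
      (fun x => derivWithin (fun y => k y * derivWithin w (Icc a b) y) (Icc a b) x * q x)
      (Icc a b) :=
    ((contDiffOn_flux hab hk hw).continuousOn_derivWithin (uniqueDiffOn_Icc hab) le_rfl).mul hq
  refine (hcont.intervalIntegrable_of_Icc hab.le).congr_uIoo fun x hx => ?_
  rw [uIoo_of_le hab.le] at hx
  simp only [eqOn_deriv_flux hx]

theorem integral_deriv_flux_mul (hab : a < b) (hk : ContDiffOn ℝ 1 k (Icc a b))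
    (hw : ContDiffOn ℝ 2 w (Icc a b)) (hq : ContDiffOn ℝ 1 q (Icc a b)) (hka : k a = 0)
    (hqb : q b = 0) :
    ∫ x in a..b, deriv (fun y => k y * deriv w y) x * q x
      = -∫ x in a..b, k x * derivWithin w (Icc a b) x * derivWithin q (Icc a b) x := by
  set F := fun y => k y * derivWithin w (Icc a b) y
  have hU := uniqueDiffOn_Icc hab
  have hF : ContDiffOn ℝ 1 F (Icc a b) := contDiffOn_flux hab hk hw
  have hIcc : uIcc a b = Icc a b := uIcc_of_le hab.le
  have hIoo : Ioo (min a b) (max a b) = Ioo a b := by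
    rw [min_eq_left hab.le, max_eq_right hab.le]
  have hparts := integral_mul_deriv_eq_deriv_mul_of_hasDerivAt (a := a) (b := b)
    (hIcc ▸ hq.continuousOn) (hIcc ▸ hF.continuousOn)
    (hIoo ▸ fun x hx => (hq.differentiableOn one_ne_zero).hasDerivAt_derivWithin_Icc hx)
    (hIoo ▸ fun x hx => (hF.differentiableOn one_ne_zero).hasDerivAt_derivWithin_Icc hx)
    ((hq.continuousOn_derivWithin hU le_rfl).intervalIntegrable_of_Icc hab.le)
    ((hF.continuousOn_derivWithin hU le_rfl).intervalIntegrable_of_Icc hab.le)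
  rw [hqb, show F a = 0 by simp only [F, hka, zero_mul]] at hparts
  calc ∫ x in a..b, deriv (fun y => k y * deriv w y) x * q x
      = ∫ x in a..b, q x * derivWithin F (Icc a b) x :=
        integral_congr_Ioo_of_le hab.le fun x hx => by rw [eqOn_deriv_flux hx, mul_comm]
    _ = -∫ x in a..b, k x * derivWithin w (Icc a b) x * derivWithin q (Icc a b) x := by
        rw [hparts, zero_mul, mul_zero, sub_zero, zero_sub]
        simp only [F, mul_comm, mul_left_comm]

variable {α : ℝ} {ω g p T : ℝ → ℝ}

theorem weighted_energy_identity (hab : a < b) (hk : ContDiffOn ℝ 1 k (Icc a b)) (hka : k a = 0)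
    (hω : ContinuousOn ω (Icc a b)) (hg : ContinuousOn g (Icc a b))
    (hp : ContDiffOn ℝ 2 p (Icc a b)) (hT : ContDiffOn ℝ 2 T (Icc a b)) (hpb : p b = 0)
    (heq : ∀ x ∈ Icc a b, α⁻¹ * p x * ω x - deriv (fun y => k y * deriv p y) x
      = deriv (fun y => k y * deriv T y) x - g x * ω x) :
    α⁻¹ * (∫ x in a..b, ω x * p x ^ 2)
        + ∫ x in a..b, k x * derivWithin p (Icc a b) x * derivWithin p (Icc a b) x
      = -(∫ x in a..b, k x * derivWithin T (Icc a b) x * derivWithin p (Icc a b) x)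
        - ∫ x in a..b, ω x * g x * p x := by
  have hpc : ContinuousOn p (Icc a b) := hp.continuousOn
  have hp₁ : ContDiffOn ℝ 1 p (Icc a b) := hp.of_le one_le_two
  have tested : α⁻¹ * (∫ x in a..b, ω x * p x ^ 2) + ∫ x in a..b, ω x * g x * p x
      = (∫ x in a..b, deriv (fun y => k y * deriv p y) x * p x)
        + ∫ x in a..b, deriv (fun y => k y * deriv T y) x * p x := by
    rw [← integral_add (intervalIntegrable_deriv_flux_mul hab hk hp hpc)
        (intervalIntegrable_deriv_flux_mul hab hk hT hpc),
      ← intervalIntegral.integral_const_mul,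
      ← integral_add ((by fun_prop : ContinuousOn _ _).intervalIntegrable_of_Icc hab.le)
        ((by fun_prop : ContinuousOn _ _).intervalIntegrable_of_Icc hab.le)]
    refine integral_congr fun x hx => ?_
    rw [uIcc_of_le hab.le] at hx
    linear_combination p x * heq x hx
  rw [integral_deriv_flux_mul hab hk hp hp₁ hka hpb,
    integral_deriv_flux_mul hab hk hT hp₁ hka hpb] at tested
  linarith

theorem weighted_control_energy_le (hab : a < b) (hα : 0 < α) (hk : ContDiffOn ℝ 1 k (Icc a b))
    (hk₀ : ∀ x ∈ Icc a b, 0 ≤ k x) (hka : k a = 0) (hω : ContinuousOn ω (Icc a b))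
    (hω₀ : ∀ x ∈ Icc a b, 0 ≤ ω x) (hg : ContinuousOn g (Icc a b))
    (hp : ContDiffOn ℝ 2 p (Icc a b)) (hT : ContDiffOn ℝ 2 T (Icc a b)) (hpb : p b = 0)
    (heq : ∀ x ∈ Icc a b, α⁻¹ * p x * ω x - deriv (fun y => k y * deriv p y) x
      = deriv (fun y => k y * deriv T y) x - g x * ω x) :
    ∫ x in a..b, ω x * (α⁻¹ * p x) ^ 2
      ≤ (∫ x in a..b, ω x * g x ^ 2)
        + α⁻¹ * ∫ x in a..b, k x * derivWithin T (Icc a b) x ^ 2 := by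
  set P := derivWithin p (Icc a b)
  set Q := derivWithin T (Icc a b)
  have hU := uniqueDiffOn_Icc hab
  have hPc : ContinuousOn P (Icc a b) := hp.continuousOn_derivWithin hU one_le_two
  have hQc : ContinuousOn Q (Icc a b) := hT.continuousOn_derivWithin hU one_le_two
  have identity := weighted_energy_identity hab hk hka hω hg hp hT hpb heq
  have hB₀ : 0 ≤ ∫ x in a..b, k x * P x * P x :=
    intervalIntegral.integral_nonneg hab.le fun x hx => by
      rw [mul_assoc]; exact mul_nonneg (hk₀ x hx) (mul_self_nonneg _)
  have hB : ∫ x in a..b, k x * P x ^ 2 = ∫ x in a..b, k x * P x * P x :=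
    integral_congr fun x _ => by ring
  have youngQP := abs_integral_mul_le_young hab.le one_pos hk.continuousOn hk₀ hQc hPc
  have younggp := abs_integral_mul_le_young hab.le hα hω hω₀ hg hp.continuousOn
  have hQP := neg_abs_le (∫ x in a..b, k x * Q x * P x)
  have hgp := neg_abs_le (∫ x in a..b, ω x * g x * p x)
  norm_num at youngQP
  have bound : α⁻¹ * (∫ x in a..b, ω x * p x ^ 2)
      ≤ (∫ x in a..b, k x * Q x ^ 2) + α * ∫ x in a..b, ω x * g x ^ 2 := by
    linarith
  calc ∫ x in a..b, ω x * (α⁻¹ * p x) ^ 2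
      = α⁻¹ * (α⁻¹ * ∫ x in a..b, ω x * p x ^ 2) := by
        rw [← intervalIntegral.integral_const_mul, ← intervalIntegral.integral_const_mul]
        exact integral_congr fun x _ => by ring
    _ ≤ α⁻¹ * ((∫ x in a..b, k x * Q x ^ 2) + α * ∫ x in a..b, ω x * g x ^ 2) :=
        mul_le_mul_of_nonneg_left bound (inv_nonneg.2 hα.le)
    _ = _ := by field_simp; ring

end

theorem control_norm_bound_general
    (χ : ℝ → ℝ) (hχ : ContDiffOn ℝ 1 χ (Set.Icc 0 1))
    (c : ℝ) (hc : 0 < c) (hχc : ∀ x ∈ Set.Icc (0:ℝ) 1, c ≤ χ x)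
    (α : ℝ) (hα : 0 < α)
    (g : ℝ → ℝ) (hg : ContinuousOn g (Set.Icc 0 1))
    (p T : ℝ → ℝ)
    (hp : ContDiffOn ℝ 2 p (Set.Icc 0 1))
    (hT : ContDiffOn ℝ 2 T (Set.Icc 0 1))
    (hp1 : p 1 = 0)
    (heq : ∀ x ∈ Set.Icc (0:ℝ) 1,
      α⁻¹ * p x * x - deriv (fun y => y * χ y * deriv p y) x
        = deriv (fun y => y * χ y * deriv T y) x - g x * x)
    (u : ℝ → ℝ) (hu : ∀ x, u x = -α⁻¹ * p x) :
    Real.sqrt (∫ x in (0:ℝ)..1, (u x) ^ 2 * x)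
      ≤ Real.sqrt ((∫ x in (0:ℝ)..1, (g x) ^ 2 * x)
          + α⁻¹ * (∫ x in (0:ℝ)..1, χ x * (deriv T x) ^ 2 * x)) := by
  have hk₀ : ∀ x ∈ Icc (0:ℝ) 1, 0 ≤ x * χ x := fun x hx =>
    mul_nonneg hx.1 (hc.le.trans (hχc x hx))
  have energy := weighted_control_energy_le one_pos hα (contDiffOn_id.mul hχ) hk₀
    (by simp) continuousOn_id (fun x hx => hx.1) hg hp hT hp1 heq
  have hu2 : ∫ x in (0:ℝ)..1, u x ^ 2 * x = ∫ x in (0:ℝ)..1, id x * (α⁻¹ * p x) ^ 2 :=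
    integral_congr fun x _ => by simp only [hu, id]; ring
  have hg2 : ∫ x in (0:ℝ)..1, g x ^ 2 * x = ∫ x in (0:ℝ)..1, id x * g x ^ 2 :=
    integral_congr fun x _ => by simp only [id]; ring
  have hT2 : ∫ x in (0:ℝ)..1, χ x * deriv T x ^ 2 * x
      = ∫ x in (0:ℝ)..1, x * χ x * derivWithin T (Icc 0 1) x ^ 2 :=
    integral_congr_Ioo_of_le zero_le_one fun x hx => by
      simp only [deriv_eqOn_derivWithin_Icc (eqOn_refl T _) hx]; ring
  rw [hu2, hg2, hT2]
  exact Real.sqrt_le_sqrt energy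

/-- L²(x dx)-norm bound on the optimal controller u = −α⁻¹p:
‖u‖_{L²ₓ} ≤ √(‖∂ₜT̂ₑ‖²_{L²ₓ} + α⁻¹‖T‖²_{Ḣ¹_{xχ}}). -/
theorem control_norm_bound
    (χ : ℝ → ℝ) (hχ : ContDiffOn ℝ 1 χ (Set.Icc 0 1))
    (c : ℝ) (hc : 0 < c) (hχc : ∀ x ∈ Set.Icc (0:ℝ) 1, c ≤ χ x)
    (lam : ℝ) (hlam : 0 < lam)
    (hpoincare : ∀ v : ℝ → ℝ, ContDiffOn ℝ 1 v (Set.Icc 0 1) → v 1 = 0 →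
      lam * ∫ x in (0:ℝ)..1, x * χ x * (v x) ^ 2
        ≤ ∫ x in (0:ℝ)..1, x * χ x * (deriv v x) ^ 2)
    (α : ℝ) (hα : 0 < α)
    (g : ℝ → ℝ) (hg : ContinuousOn g (Set.Icc 0 1))
    (p T : ℝ → ℝ)
    (hp : ContDiffOn ℝ 2 p (Set.Icc 0 1))
    (hT : ContDiffOn ℝ 2 T (Set.Icc 0 1))
    (hp1 : p 1 = 0) (hT1 : T 1 = 0)
    (heq : ∀ x ∈ Set.Icc (0:ℝ) 1,
      α⁻¹ * p x * x - deriv (fun y => y * χ y * deriv p y) x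
        = deriv (fun y => y * χ y * deriv T y) x - g x * x)
    (u : ℝ → ℝ) (hu : ∀ x, u x = -α⁻¹ * p x) :
    Real.sqrt (∫ x in (0:ℝ)..1, (u x) ^ 2 * x)
      ≤ Real.sqrt ((∫ x in (0:ℝ)..1, (g x) ^ 2 * x)
          + α⁻¹ * (∫ x in (0:ℝ)..1, χ x * (deriv T x) ^ 2 * x)) :=
  control_norm_bound_general χ hχ c hc hχc α hα g hg p T hp hT hp1 heq u hu
end
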